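/- arXiv:2301.10111 — 3 statements merged into one kernel-verified Lean document; each statement's English description precedes it below -/
import Mathlib

section
/- Every nilpotent subgroup of the symmetric group Sym_m (m ≥ 1) has order at most 2^(m-1). -/
open Equiv MulAction

lemma exists_center_ne_one {G : Type*} [Group G] [Nontrivial G]
    (h : Group.IsNilpotent G) : ∃ z : G, z ∈ Subgroup.center G ∧ z ≠ 1 := by
  by_contra hc
  push_neg at hc
  have hcen : Subgroup.center G = ⊥ := by
    rw [eq_bot_iff]
    intro x hx
    simpa using hc x hx
  have hall : ∀ k, Subgroup.upperCentralSeries G k = ⊥ := by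
    intro k
    induction k with
    | zero => simp
    | succ k ih =>
      rw [eq_bot_iff]
      intro x hx
      rw [mem_upperCentralSeries_succ_iff] at hx
      have hxc : x ∈ Subgroup.center G := by
        rw [Subgroup.mem_center_iff]
        intro y
        have h2 : x * y * x⁻¹ * y⁻¹ = 1 := by
          have := hx y; rwa [ih, Subgroup.mem_bot] at this
        have h3 : x * y * x⁻¹ = y := by
          have := mul_eq_one_iff_eq_inv.mp h2
          simpa using this
        calc y * x = (x * y * x⁻¹) * x := by rw [h3]
        _ = x * y := by group
      rw [hcen, Subgroup.mem_bot] at hxc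
      simp [hxc]
  have h1 := upperCentralSeries_nilpotencyClass (G := G)
  rw [hall] at h1
  exact bot_ne_top h1


lemma perm_nilpotent_aux (n : ℕ) :
    ∀ (α : Type) [Fintype α] [DecidableEq α], Fintype.card α = n →
      ∀ N : Subgroup (Equiv.Perm α), Group.IsNilpotent N →
        Nat.card N ≤ 2 ^ (n - 1) := by
  induction n using Nat.strong_induction_on with
  | _ n IH =>
    intro α _ _ hcard N hN
    classical
    rcases le_or_gt (Nat.card N) 1 with h1 | h1
    · exact h1.trans Nat.one_le_two_pow
    have hnt : Nontrivial N := by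
      rwa [Finite.one_lt_card_iff_nontrivial] at h1
    obtain ⟨g0, hg0⟩ := exists_ne (1 : N)
    have hg0v : (g0 : Perm α) ≠ 1 := fun h => hg0 (Subtype.ext h)
    have hne : Nonempty α := by
      by_contra hemp
      rw [not_nonempty_iff] at hemp
      exact hg0v (Equiv.ext fun x => (hemp.false x).elim)
    obtain ⟨x0⟩ := id hne
    have hn1 : 1 ≤ n := by
      rw [← hcard]; exact Fintype.card_pos
    set O : Set α := MulAction.orbit N x0 with hOdef
    have hsmul : ∀ (g : N) (x : α), g • x = (g : Perm α) x := fun g x => by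
      rw [Subgroup.smul_def, Equiv.Perm.smul_def]
    have hmem : ∀ (g : N) (x : α), x ∈ O ↔ (g : Perm α) x ∈ O := by
      intro g x
      constructor
      · rintro ⟨h, rfl⟩
        refine ⟨g * h, ?_⟩
        show (g * h) • x0 = (g : Perm α) (h • x0)
        rw [mul_smul, hsmul]
      · rintro ⟨h, hh⟩
        refine ⟨g⁻¹ * h, ?_⟩
        show (g⁻¹ * h) • x0 = x
        simp only at hh
        rw [mul_smul, hh, hsmul]
        simp
    by_cases hO : O = Set.univ
    · -- transitive case
      obtain ⟨z', hz'c, hz'⟩ := exists_center_ne_one hN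
      have hfinord : orderOf z' ≠ 0 := (orderOf_pos z').ne'
      have hord1 : orderOf z' ≠ 1 := by simpa [orderOf_eq_one_iff] using hz'
      set p := (orderOf z').minFac with hpdef
      have hpp : p.Prime := Nat.minFac_prime hord1
      have hpdvd : p ∣ orderOf z' := Nat.minFac_dvd _
      set z : N := z' ^ (orderOf z' / p) with hzdef
      have hzc : z ∈ Subgroup.center N := Subgroup.pow_mem _ hz'c _
      have hordz : orderOf z = p := orderOf_pow_orderOf_div hfinord hpdvd
      set ζ : Perm α := (z : Perm α) with hζdef
      have hordζ : orderOf ζ = p := by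
        rw [hζdef, ← hordz]
        exact orderOf_injective N.subtype Subtype.coe_injective z
      have hcomm : ∀ g : N, Commute (g : Perm α) ζ := by
        intro g
        have h2 : g * z = z * g := Subgroup.mem_center_iff.mp hzc g
        have := congrArg Subtype.val h2
        exact this
      have hζfpf : ∀ x : α, ζ x ≠ x := by
        intro x hx
        have hζ1 : ζ = 1 := by
          ext y
          have hyO : y ∈ O := hO ▸ Set.mem_univ y
          have hxO : x ∈ O := hO ▸ Set.mem_univ x
          obtain ⟨g, hg⟩ := hyO
          obtain ⟨h, hh⟩ := hxO
          simp only at hg hh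
          have hky : ((g * h⁻¹ : N) : Perm α) x = y := by
            rw [← hsmul, ← hg, ← hh, mul_smul, inv_smul_smul]
          have hcz := (hcomm (g * h⁻¹)).symm
          calc ζ y = ζ (((g * h⁻¹ : N) : Perm α) x) := by rw [hky]
            _ = (ζ * ((g * h⁻¹ : N) : Perm α)) x := rfl
            _ = (((g * h⁻¹ : N) : Perm α) * ζ) x := by rw [hcz.eq]
            _ = ((g * h⁻¹ : N) : Perm α) (ζ x) := rfl
            _ = y := by rw [hx, hky]
        rw [hζ1, orderOf_one] at hordζ
        exact hpp.one_lt.ne' hordζ.symm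
      set H := Subgroup.zpowers ζ with hHdef
      haveI : Fintype H := Fintype.ofFinite _
      have hcardH : Fintype.card H = p := by
        rw [← Nat.card_eq_fintype_card, Nat.card_zpowers, hordζ]
      have hHsmul : ∀ (h : H) (x : α), h • x = (h : Perm α) x := fun h x => by
        rw [Subgroup.smul_def, Equiv.Perm.smul_def]
      have horb : ∀ x : α, Nat.card (MulAction.orbit H x) = p := by
        intro x
        haveI : Fintype (MulAction.orbit H x) := Fintype.ofFinite _
        have hos := MulAction.card_orbit_mul_card_stabilizer_eq_card_group H x
        have hdvd : Fintype.card (MulAction.orbit H x) ∣ p := by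
          rw [← hcardH]; exact ⟨_, hos.symm⟩
        rcases (Nat.Prime.eq_one_or_self_of_dvd hpp _ hdvd) with hone | hp
        · exfalso
          have hsub : Subsingleton (MulAction.orbit H x) :=
            Fintype.card_le_one_iff_subsingleton.mp hone.le
          have hmem1 : ζ x ∈ MulAction.orbit H x := by
            refine ⟨⟨ζ, Subgroup.mem_zpowers ζ⟩, ?_⟩
            exact hHsmul _ x
          have := Subtype.ext_iff.mp
            (hsub.elim ⟨ζ x, hmem1⟩ ⟨x, MulAction.mem_orbit_self x⟩)
          exact hζfpf x this
        · rw [Nat.card_eq_fintype_card, hp]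
      set Q := MulAction.orbitRel.Quotient H α with hQdef
      haveI : Fintype Q := Fintype.ofFinite _
      set q := Fintype.card Q with hqdef
      have hq1 : 1 ≤ q := Fintype.card_pos_iff.mpr ⟨Quotient.mk'' x0⟩
      have hnpq : n = p * q := by
        haveI : ∀ ω : Q, Fintype (ω.orbit) := fun ω => Fintype.ofFinite _
        have e := MulAction.selfEquivSigmaOrbits' H α
        rw [← hcard, Fintype.card_congr e, Fintype.card_sigma]
        have : ∀ ω : Q, Fintype.card (ω.orbit) = p := by
          intro ω
          rw [← Nat.card_eq_fintype_card,
            MulAction.orbitRel.Quotient.orbit_eq_orbit_out ω Quotient.out_eq']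
          exact horb _
        simp only [this, Finset.sum_const, Finset.card_univ, smul_eq_mul, mul_comm]
        exact congrArg _ (Fintype.card_congr (Equiv.refl _))
      have hqn : q < n := by
        have := hpp.two_le
        calc q < 2 * q := by omega
          _ ≤ p * q := Nat.mul_le_mul_right q hpp.two_le
          _ = n := hnpq.symm
      -- action of N on Q
      have hrespects : ∀ (g : N) (x y : α), MulAction.orbitRel H α x y →
          MulAction.orbitRel H α ((g : Perm α) x) ((g : Perm α) y) := by
        intro g x y hxy
        rw [MulAction.orbitRel_apply] at hxy ⊢
        obtain ⟨h, hh⟩ := hxy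
        obtain ⟨i, hi⟩ := h.2
        simp only at hi
        refine ⟨h, ?_⟩
        simp only at hh
        rw [hHsmul] at hh
        show h • ((g : Perm α) y) = (g : Perm α) x
        rw [hHsmul]
        have hcz : Commute (g : Perm α) (h : Perm α) := by
          rw [← hi]; exact (hcomm g).zpow_right i
        calc (h : Perm α) ((g : Perm α) y) = ((h : Perm α) * (g : Perm α)) y := rfl
          _ = ((g : Perm α) * (h : Perm α)) y := by rw [hcz.eq]
          _ = (g : Perm α) ((h : Perm α) y) := rfl
          _ = (g : Perm α) x := by rw [hh]
      let eQ : N → Q → Q := fun g => Quotient.map' (fun x => (g : Perm α) x)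
        (fun x y hxy => hrespects g x y hxy)
      have heQ : ∀ (g : N) (x : α),
          eQ g (Quotient.mk'' x) = Quotient.mk'' ((g : Perm α) x) := fun g x => rfl
      have heQcomp : ∀ (g h : N) (ω : Q), eQ g (eQ h ω) = eQ (g * h) ω := by
        intro g h ω
        induction ω using Quotient.inductionOn' with
        | h x => simp [heQ, Subgroup.coe_mul]
      have heQone : ∀ ω : Q, eQ 1 ω = ω := by
        intro ω
        induction ω using Quotient.inductionOn' with
        | h x => simp [heQ]
      let φ : N →* Equiv.Perm Q :=
        { toFun := fun g =>
            { toFun := eQ g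
              invFun := eQ g⁻¹
              left_inv := fun ω => by rw [heQcomp, inv_mul_cancel, heQone]
              right_inv := fun ω => by rw [heQcomp, mul_inv_cancel, heQone] }
          map_one' := Equiv.ext fun ω => heQone ω
          map_mul' := fun g h => Equiv.ext fun ω => (heQcomp g h ω).symm }
      have hφ : ∀ (g : N) (ω : Q), φ g ω = eQ g ω := fun g ω => rfl
      -- the range
      have hrange : Nat.card φ.range ≤ 2 ^ (q - 1) := by
        have : Group.IsNilpotent φ.range :=
          nilpotent_of_surjective φ.rangeRestrict φ.rangeRestrict_surjective
        exact IH q hqn Q rfl φ.range this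
      -- the kernel
      have hker : Nat.card φ.ker ≤ p ^ q := by
        let F : φ.ker → ∀ ω : Q, MulAction.orbit H (Quotient.out ω) := fun k ω =>
          ⟨((k : N) : Perm α) (Quotient.out ω), by
            have hk : φ (k : N) = 1 := k.2
            have h2 : eQ (k : N) (Quotient.mk'' (Quotient.out ω)) =
                Quotient.mk'' (Quotient.out ω) := by
              rw [← hφ, hk]
              simp [Quotient.out_eq']
            rw [heQ, Quotient.eq''] at h2
            exact MulAction.orbitRel_apply.mp h2⟩
        have hFinj : Function.Injective F := by
          intro k1 k2 hk
          have hval : ∀ ω : Q, ((k1 : N) : Perm α) (Quotient.out ω) =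
              ((k2 : N) : Perm α) (Quotient.out ω) := by
            intro ω
            exact Subtype.ext_iff.mp (congrFun hk ω)
          apply Subtype.ext; apply Subtype.ext; apply Equiv.ext
          intro x
          set ω : Q := Quotient.mk'' x with hω
          have hrel : MulAction.orbitRel H α x (Quotient.out ω) := by
            rw [← Quotient.eq'']
            exact (Quotient.out_eq' ω).symm
          rw [MulAction.orbitRel_apply] at hrel
          obtain ⟨h, hh⟩ := hrel
          obtain ⟨i, hi⟩ := h.2
          simp only at hh hi
          rw [hHsmul] at hh
          have key : ∀ k : φ.ker, ((k : N) : Perm α) x =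
              (ζ ^ i) (((k : N) : Perm α) (Quotient.out ω)) := by
            intro k
            have hcz : Commute ((k : N) : Perm α) (ζ ^ i) :=
              (hcomm (k : N)).zpow_right i
            calc ((k : N) : Perm α) x
                = ((k : N) : Perm α) ((ζ ^ i) (Quotient.out ω)) := by
                  rw [← hh, hi]
              _ = (((k : N) : Perm α) * ζ ^ i) (Quotient.out ω) := rfl
              _ = ((ζ ^ i) * ((k : N) : Perm α)) (Quotient.out ω) := by rw [hcz.eq]
              _ = (ζ ^ i) (((k : N) : Perm α) (Quotient.out ω)) := rfl
          rw [key k1, key k2, hval ω]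
        have hcard2 : Nat.card (∀ ω : Q, MulAction.orbit H (Quotient.out ω)) = p ^ q := by
          rw [Nat.card_pi]
          simp only [horb]
          rw [Finset.prod_const, Finset.card_univ]
        rw [← hcard2]
        exact Nat.card_le_card_of_injective F hFinj
      -- put it together
      have hdec : Nat.card N = Nat.card φ.range * Nat.card φ.ker := by
        rw [Subgroup.card_eq_card_quotient_mul_card_subgroup φ.ker,
          Nat.card_congr (QuotientGroup.quotientKerEquivRange φ).toEquiv]
      have hple : p ≤ 2 ^ (p - 1) := by
        have h2 := Nat.lt_two_pow_self (n := p - 1)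
        have h3 : p - 1 + 1 ≤ 2 ^ (p - 1) := h2
        rwa [Nat.sub_add_cancel hpp.one_lt.le] at h3
      have hexp : q - 1 + (p - 1) * q = p * q - 1 := by
        have h4 : (p - 1) * q = p * q - q := by rw [Nat.sub_mul, one_mul]
        have h5 : q ≤ p * q := Nat.le_mul_of_pos_left q hpp.pos
        omega
      calc Nat.card N = Nat.card φ.range * Nat.card φ.ker := hdec
        _ ≤ 2 ^ (q - 1) * p ^ q := Nat.mul_le_mul hrange hker
        _ ≤ 2 ^ (q - 1) * (2 ^ (p - 1)) ^ q := by
          exact Nat.mul_le_mul_left _ (Nat.pow_le_pow_left hple q)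
        _ = 2 ^ (q - 1 + (p - 1) * q) := by rw [← pow_mul, ← pow_add]
        _ = 2 ^ (n - 1) := by rw [hexp, ← hnpq]
    · -- intransitive case
      have hx0O : x0 ∈ O := MulAction.mem_orbit_self x0
      obtain ⟨y0, hy0⟩ : ∃ y, y ∉ O := by
        by_contra hc; push_neg at hc
        exact hO (Set.eq_univ_iff_forall.mpr hc)
      set a := Fintype.card {x // x ∈ O} with ha
      set b := Fintype.card {x // x ∉ O} with hb
      have hab : a + b = n := by
        rw [ha, hb, ← hcard]
        rw [Fintype.card_subtype_compl (fun x => x ∈ O)]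
        have hle : Fintype.card {x // x ∈ O} ≤ Fintype.card α :=
          Fintype.card_subtype_le _
        omega
      have ha1 : 1 ≤ a := Fintype.card_pos_iff.mpr ⟨⟨x0, hx0O⟩⟩
      have hb1 : 1 ≤ b := Fintype.card_pos_iff.mpr ⟨⟨y0, hy0⟩⟩
      -- the restriction homomorphism
      let f : N →* Perm {x // x ∈ O} × Perm {x // x ∉ O} :=
        { toFun := fun g =>
            ((g : Perm α).subtypePerm (fun x => (hmem g x).symm),
             (g : Perm α).subtypePerm (fun x => not_congr (hmem g x).symm)),
          map_one' := by
            ext x <;> simp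
          map_mul' := fun g h => by
            ext x <;> rfl }
      have hfinj : Function.Injective f := by
        intro g h hgh
        have h1 := congrArg Prod.fst hgh
        have h2 := congrArg Prod.snd hgh
        ext x
        by_cases hx : x ∈ O
        · have := congrArg (fun (e : Perm {x // x ∈ O}) => (e ⟨x, hx⟩ : α)) h1
          exact this
        · have := congrArg (fun (e : Perm {x // x ∉ O}) => (e ⟨x, hx⟩ : α)) h2
          exact this
      -- ranges of the projections
      let N1 : Subgroup (Perm {x // x ∈ O}) :=
        ((MonoidHom.fst _ _).comp f).range
      let N2 : Subgroup (Perm {x // x ∉ O}) :=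
        ((MonoidHom.snd _ _).comp f).range
      have hr : f.range ≤ N1.prod N2 := by
        rintro ⟨u, v⟩ ⟨g, hg⟩
        exact ⟨⟨g, congrArg Prod.fst hg⟩, ⟨g, congrArg Prod.snd hg⟩⟩
      have hcN : Nat.card N = Nat.card f.range :=
        Nat.card_congr (MonoidHom.ofInjective hfinj).toEquiv
      have hcle : Nat.card f.range ≤ Nat.card (N1.prod N2) :=
        Subgroup.card_le_of_le hr
      have hprod : Nat.card (N1.prod N2) = Nat.card N1 * Nat.card N2 := by
        rw [Nat.card_congr (Subgroup.prodEquiv N1 N2).toEquiv, Nat.card_prod]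
      have hN1 : Group.IsNilpotent N1 :=
        nilpotent_of_surjective ((MonoidHom.fst _ _).comp f).rangeRestrict
          ((MonoidHom.fst _ _).comp f).rangeRestrict_surjective
      have hN2 : Group.IsNilpotent N2 :=
        nilpotent_of_surjective ((MonoidHom.snd _ _).comp f).rangeRestrict
          ((MonoidHom.snd _ _).comp f).rangeRestrict_surjective
      have hb1' : Nat.card N1 ≤ 2 ^ (a - 1) :=
        IH a (by omega) _ rfl N1 hN1
      have hb2' : Nat.card N2 ≤ 2 ^ (b - 1) :=
        IH b (by omega) _ rfl N2 hN2
      calc Nat.card N = Nat.card f.range := hcN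
        _ ≤ Nat.card N1 * Nat.card N2 := hprod ▸ hcle
        _ ≤ 2 ^ (a - 1) * 2 ^ (b - 1) := Nat.mul_le_mul hb1' hb2'
        _ = 2 ^ (a - 1 + (b - 1)) := (pow_add 2 _ _).symm
        _ ≤ 2 ^ (n - 1) := Nat.pow_le_pow_right (by omega) (by omega)

theorem nilpotent_subgroup_perm_card_le (m : ℕ) (hm : 1 ≤ m)
    (N : Subgroup (Equiv.Perm (Fin m))) (hN : Group.IsNilpotent N) :
    Nat.card N ≤ 2 ^ (m - 1) :=
  perm_nilpotent_aux m (Fin m) (Fintype.card_fin m) N hN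
end

section
/- Every finite nilpotent subgroup N of GL(m, ℂ) contains an abelian normal subgroup T with index [N : T] ≤ 2^(m-1). -/
open Function

/-- Restriction of a permutation action to a fiber of an invariant coloring. -/
private def fiberHom {G α I : Type*} [Group G] (ρ : G →* Equiv.Perm α) (c : α → I)
    (hc : ∀ (g : G) (x : α), c (ρ g x) = c x) (i : I) :
    G →* Equiv.Perm {x : α // c x = i} where
  toFun g := (ρ g).subtypePerm (fun x => by rw [hc g x])
  map_one' := by
    ext x
    simp
  map_mul' g h := by
    ext x
    simp [Equiv.Perm.subtypePerm_apply]
    rfl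

private lemma counting {G α I : Type*} [Group G] [Finite G] [Finite α] [Fintype I]
    (ρ : G →* Equiv.Perm α) (hρ : Function.Injective ρ) (c : α → I)
    (hc : ∀ (g : G) (x : α), c (ρ g x) = c x) (b : I → ℕ)
    (hb : ∀ i, Nat.card (MonoidHom.range (fiberHom ρ c hc i)) ≤ b i) :
    Nat.card G ≤ ∏ i, b i := by
  have hinj : Function.Injective
      (fun (g : G) => (fun i => (⟨fiberHom ρ c hc i g, ⟨g, rfl⟩⟩ :
        (fiberHom ρ c hc i).range)) : G → ∀ i, (fiberHom ρ c hc i).range) := by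
    intro g g' h
    apply hρ
    ext x
    have h1 : fiberHom ρ c hc (c x) g = fiberHom ρ c hc (c x) g' := by
      simpa [Subtype.ext_iff] using congrFun h (c x)
    have h2 := congrArg (fun (σ : Equiv.Perm {y : α // c y = c x}) => (σ ⟨x, rfl⟩ : α)) h1
    simpa [fiberHom, Equiv.Perm.subtypePerm_apply] using h2
  calc Nat.card G ≤ Nat.card (∀ i, (fiberHom ρ c hc i).range) :=
        Nat.card_le_card_of_injective _ hinj
    _ = ∏ i, Nat.card ((fiberHom ρ c hc i).range) := Nat.card_pi
    _ ≤ ∏ i, b i := Finset.prod_le_prod' (fun i _ => hb i)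

private lemma card_fiber_sum {α I : Type*} [Finite α] [Fintype I] (c : α → I) :
    ∑ i, Nat.card {x : α // c x = i} = Nat.card α := by
  classical
  cases nonempty_fintype α
  simp only [Nat.card_eq_fintype_card]
  rw [← Fintype.card_congr (Equiv.sigmaFiberEquiv c)]
  simp [Fintype.card_sigma]

private lemma inf_center_aux {G : Type*} [Group G] (H : Subgroup G) [hHn : H.Normal] :
    ∀ n : ℕ, H ⊓ Subgroup.upperCentralSeries G n ≠ ⊥ → H ⊓ Subgroup.center G ≠ ⊥ := by
  intro n
  induction n with
  | zero => simp
  | succ n ih =>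
    intro hne
    by_cases h0 : H ⊓ Subgroup.upperCentralSeries G n = ⊥
    · have hle : H ⊓ Subgroup.upperCentralSeries G (n + 1) ≤ H ⊓ Subgroup.center G := by
        intro x hx
        obtain ⟨hxH, hxU⟩ := hx
        refine ⟨hxH, Subgroup.mem_center_iff.mpr fun y => ?_⟩
        have hcomm : x * y * x⁻¹ * y⁻¹ ∈ H ⊓ Subgroup.upperCentralSeries G n := by
          refine ⟨?_, (Subgroup.mem_upperCentralSeries_succ_iff).mp hxU y⟩
          have : y * x⁻¹ * y⁻¹ ∈ H := by
            have := hHn.conj_mem x⁻¹ (H.inv_mem hxH) y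
            simpa [mul_assoc] using this
          simpa [mul_assoc] using H.mul_mem hxH this
        rw [h0, Subgroup.mem_bot] at hcomm
        have : x * y = y * x := by
          have h1 : x * y * x⁻¹ * y⁻¹ * y = y := by rw [hcomm]; simp
          have h2 : x * y * x⁻¹ = y := by simpa [mul_assoc] using h1
          calc x * y = (x * y * x⁻¹) * x := by simp [mul_assoc]
            _ = y * x := by rw [h2]
        exact this.symm
      intro hbot
      exact hne (le_bot_iff.mp (hbot ▸ hle))
    · exact ih h0

private lemma inf_center_ne_bot {G : Type*} [Group G] (hG : Group.IsNilpotent G)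
    (H : Subgroup G) [H.Normal] (hH : H ≠ ⊥) : H ⊓ Subgroup.center G ≠ ⊥ := by
  obtain ⟨n, hn⟩ := hG.nilpotent'
  exact inf_center_aux H n (by rwa [hn, inf_top_eq])

private lemma center_exists_ne_one {G : Type*} [Group G] [Nontrivial G]
    (hG : Group.IsNilpotent G) : ∃ z : G, z ∈ Subgroup.center G ∧ z ≠ 1 := by
  have h := inf_center_ne_bot hG ⊤ (by simp)
  rw [top_inf_eq] at h
  obtain ⟨a, ha⟩ := Subgroup.ne_bot_iff_exists_ne_one.mp h
  refine ⟨a.1, a.2, fun hc => ha (Subtype.ext hc)⟩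

private lemma nilpotent_perm_card (n : ℕ) :
    ∀ (α : Type) [Finite α], Nat.card α ≤ n →
    ∀ (G : Type) [Group G] [Finite G], Group.IsNilpotent G →
    ∀ ρ : G →* Equiv.Perm α, Function.Injective ρ →
    Nat.card G ≤ 2 ^ (Nat.card α - 1) := by
  induction n using Nat.strong_induction_on with
  | _ n IH =>
  intro α _ hα G _ _ hG ρ hρ
  by_cases hk : Nat.card α ≤ 1
  · have hsub : Subsingleton α := Finite.card_le_one_iff_subsingleton.mp hk
    have hsubP : Subsingleton (Equiv.Perm α) := inferInstance
    have hGsub : Subsingleton G := hρ.subsingleton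
    have : Nat.card G ≤ 1 := Finite.card_le_one_iff_subsingleton.mpr hGsub
    exact this.trans Nat.one_le_two_pow
  · push_neg at hk
    have hnt : Nontrivial α := Finite.one_lt_card_iff_nontrivial.mp hk
    by_cases htr : ∀ x y : α, ∃ g : G, ρ g x = y
    · -- transitive case
      have hGnt : Nontrivial G := by
        obtain ⟨x, y, hxy⟩ := exists_pair_ne α
        obtain ⟨g, hg⟩ := htr x y
        exact ⟨⟨g, 1, fun h => hxy (by rw [h, map_one] at hg; exact hg.symm ▸ rfl)⟩⟩
      obtain ⟨z, hzc, hz1⟩ := center_exists_ne_one hG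
      have hswap : ∀ (g : G) (j : ℤ) (x : α), ρ (z ^ j) (ρ g x) = ρ g (ρ (z ^ j) x) := by
        intro g j x
        have hcz : Commute g z := Subgroup.mem_center_iff.mp hzc g
        have hcom : Commute g (z ^ j) := hcz.zpow_right j
        rw [← Equiv.Perm.mul_apply, ← map_mul, ← hcom.eq, map_mul, Equiv.Perm.mul_apply]
      have hzf : ∀ x : α, ρ z x ≠ x := by
        intro x hfix
        apply hz1
        apply hρ
        rw [map_one]
        ext y
        obtain ⟨g, rfl⟩ := htr x y
        show ρ z (ρ g x) = ρ g x
        rw [← Equiv.Perm.mul_apply, ← map_mul, ← (Subgroup.mem_center_iff.mp hzc g),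
          map_mul, Equiv.Perm.mul_apply, hfix]
      classical
      let r : Setoid α := ⟨fun x y => ∃ j : ℤ, ρ (z ^ j) x = y,
        ⟨fun x => ⟨0, by rw [zpow_zero, map_one]; rfl⟩,
         by rintro x y ⟨j, rfl⟩
            refine ⟨-j, ?_⟩
            rw [← Equiv.Perm.mul_apply, ← map_mul, ← zpow_add, neg_add_cancel, zpow_zero,
              map_one]
            rfl,
         by rintro x y w ⟨j, rfl⟩ ⟨l, rfl⟩
            exact ⟨l + j, by rw [zpow_add, map_mul, Equiv.Perm.mul_apply]⟩⟩⟩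
      let Ω := Quotient r
      haveI : Finite Ω := Quotient.finite r
      have hresp : ∀ (g : G) (x y : α), r.r x y → r.r (ρ g x) (ρ g y) := by
        rintro g x y ⟨j, rfl⟩
        exact ⟨j, hswap g j x⟩
      have hinvcomp : ∀ (g : G) (x : α), ρ g⁻¹ (ρ g x) = x := by
        intro g x
        rw [map_inv]
        exact Equiv.symm_apply_apply _ _
      let Φg : G → Equiv.Perm Ω := fun g =>
        { toFun := Quotient.map' (ρ g) (hresp g)
          invFun := Quotient.map' (ρ g⁻¹) (hresp g⁻¹)
          left_inv := fun q => Quotient.inductionOn' q (fun x => by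
            simp only [Quotient.map'_mk'']
            rw [hinvcomp g x])
          right_inv := fun q => Quotient.inductionOn' q (fun x => by
            simp only [Quotient.map'_mk'']
            have h3 : ρ g (ρ g⁻¹ x) = x := by
              have h := hinvcomp g⁻¹ x
              rwa [inv_inv] at h
            rw [h3]) }
      have hΦg_mk : ∀ (g : G) (x : α), Φg g (Quotient.mk'' x) = Quotient.mk'' (ρ g x) :=
        fun g x => rfl
      let Φ : G →* Equiv.Perm Ω :=
        { toFun := Φg
          map_one' := Equiv.ext fun q => Quotient.inductionOn' q (fun x => by
            rw [hΦg_mk, map_one]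
            rfl)
          map_mul' := fun g h => Equiv.ext fun q => Quotient.inductionOn' q (fun x => by
            rw [Equiv.Perm.mul_apply, hΦg_mk, hΦg_mk, hΦg_mk, map_mul, Equiv.Perm.mul_apply]) }
      haveI : Fintype Ω := Fintype.ofFinite Ω
      let cq : α → Ω := fun x => Quotient.mk'' x
      let s : Ω → ℕ := fun ω => Nat.card {x : α // cq x = ω}
      have hfib : ∀ ω : Ω, 2 ≤ s ω := by
        intro ω
        refine Quotient.inductionOn' ω (fun x => ?_)
        have h2 : cq (ρ z x) = Quotient.mk'' x := Quotient.sound' ⟨-1, by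
          rw [zpow_neg_one, map_inv]
          exact Equiv.symm_apply_apply _ _⟩
        have : Nontrivial {y : α // cq y = Quotient.mk'' x} := by
          refine ⟨⟨⟨ρ z x, h2⟩, ⟨x, rfl⟩, fun hcon => hzf x ?_⟩⟩
          exact congrArg Subtype.val hcon
        exact Finite.one_lt_card_iff_nontrivial.mpr this
      have hsumq : ∑ ω, s ω = Nat.card α := card_fiber_sum cq
      have h2r : 2 * Nat.card Ω ≤ Nat.card α := by
        rw [← hsumq]
        calc 2 * Nat.card Ω = ∑ _ω : Ω, 2 := by
              rw [Finset.sum_const, smul_eq_mul, Finset.card_univ, Nat.card_eq_fintype_card,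
                Nat.mul_comm]
          _ ≤ ∑ ω, s ω := Finset.sum_le_sum (fun ω _ => hfib ω)
      by_cases hr1 : Nat.card Ω ≤ 1
      · haveI hsub : Subsingleton Ω := Finite.card_le_one_iff_subsingleton.mp hr1
        have hz_trans : ∀ x y : α, ∃ j : ℤ, ρ (z ^ j) x = y := fun x y =>
          Quotient.exact' (Subsingleton.elim (Quotient.mk'' x : Ω) (Quotient.mk'' y))
        obtain ⟨x₀⟩ : Nonempty α := inferInstance
        have hinj2 : Function.Injective (fun g : G => ρ g x₀) := by
          intro g g' hgg
          simp only at hgg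
          have hfixall : ∀ y, ρ (g⁻¹ * g') y = y := by
            intro y
            obtain ⟨j, rfl⟩ := hz_trans x₀ y
            rw [← hswap (g⁻¹ * g') j x₀]
            have h2 : ρ (g⁻¹ * g') x₀ = x₀ := by
              rw [map_mul, Equiv.Perm.mul_apply, ← hgg]
              exact hinvcomp g _
            rw [h2]
          have hone : g⁻¹ * g' = 1 := by
            apply hρ
            rw [map_one]
            exact Equiv.ext hfixall
          exact (inv_mul_eq_one.mp hone)
        have hle := Nat.card_le_card_of_injective _ hinj2
        have hk2 : Nat.card α ≤ 2 ^ (Nat.card α - 1) := by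
          have h := Nat.lt_two_pow_self (n := Nat.card α - 1)
          omega
        exact le_trans hle hk2
      · have hr2 : 2 ≤ Nat.card Ω := by omega
        have hrk : Nat.card Ω < Nat.card α := by omega
        haveI : Group.IsNilpotent G := hG
        haveI : Group.IsNilpotent Φ.range := nilpotent_of_surjective _
          Φ.rangeRestrict_surjective
        have hQ : Nat.card Φ.range ≤ 2 ^ (Nat.card Ω - 1) :=
          IH (Nat.card Ω) (by omega) Ω le_rfl _ inferInstance _
            (Subgroup.subtype_injective _)
        have hcK : ∀ (g : Φ.ker) (x : α), cq (ρ ((Φ.ker).subtype g) x) = cq x := by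
          rintro ⟨g, hg⟩ x
          rw [MonoidHom.mem_ker] at hg
          have h1 : Φ g (Quotient.mk'' x) = Quotient.mk'' (ρ g x) := rfl
          rw [hg] at h1
          exact h1.symm
        have hbK : ∀ ω : Ω, Nat.card
            (MonoidHom.range (fiberHom (ρ.comp (Φ.ker).subtype) cq hcK ω)) ≤
            2 ^ (s ω - 1) := by
          intro ω
          haveI : Nontrivial Ω := Finite.one_lt_card_iff_nontrivial.mp (by omega)
          obtain ⟨ω', hω'⟩ := exists_ne ω
          have hpair : s ω + s ω' ≤ Nat.card α := by
            rw [← hsumq]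
            have hp : ∑ w ∈ ({ω, ω'} : Finset Ω), s w = s ω + s ω' :=
              Finset.sum_pair hω'.symm
            rw [← hp]
            exact Finset.sum_le_sum_of_subset (Finset.subset_univ _)
          have hfl : s ω < n := by
            have := hfib ω'
            omega
          haveI : Group.IsNilpotent (Φ.ker) := Subgroup.isNilpotent _
          haveI : Group.IsNilpotent
              (MonoidHom.range (fiberHom (ρ.comp (Φ.ker).subtype) cq hcK ω)) :=
            nilpotent_of_surjective _ (fiberHom _ cq hcK ω).rangeRestrict_surjective
          exact IH (s ω) hfl _ le_rfl _ inferInstance _ (Subgroup.subtype_injective _)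
        have hK : Nat.card Φ.ker ≤ 2 ^ (Nat.card α - Nat.card Ω) := by
          calc Nat.card Φ.ker ≤ ∏ ω, 2 ^ (s ω - 1) :=
                counting (ρ.comp (Φ.ker).subtype)
                  (hρ.comp (Subgroup.subtype_injective _)) cq hcK _ hbK
            _ = 2 ^ (∑ ω, (s ω - 1)) := Finset.prod_pow_eq_pow_sum _ _ _
            _ = 2 ^ (Nat.card α - Nat.card Ω) := by
                congr 1
                have h1 : ∑ ω, ((s ω - 1) + 1) = ∑ ω, s ω :=
                  Finset.sum_congr rfl (fun ω _ => by have := hfib ω; omega)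
                rw [Finset.sum_add_distrib, Finset.sum_const, smul_eq_mul, Finset.card_univ,
                  Nat.mul_one, hsumq] at h1
                have hc2 : Nat.card Ω = Fintype.card Ω := Nat.card_eq_fintype_card
                omega
        have hcardG : Nat.card G = Nat.card Φ.range * Nat.card Φ.ker := by
          rw [Subgroup.card_eq_card_quotient_mul_card_subgroup Φ.ker]
          congr 1
          exact Nat.card_congr (QuotientGroup.quotientKerEquivRange Φ).toEquiv
        calc Nat.card G = Nat.card Φ.range * Nat.card Φ.ker := hcardG
          _ ≤ 2 ^ (Nat.card Ω - 1) * 2 ^ (Nat.card α - Nat.card Ω) :=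
              Nat.mul_le_mul hQ hK
          _ = 2 ^ ((Nat.card Ω - 1) + (Nat.card α - Nat.card Ω)) := (pow_add 2 _ _).symm
          _ ≤ 2 ^ (Nat.card α - 1) := Nat.pow_le_pow_right (by norm_num) (by omega)
    · -- intransitive case
      push_neg at htr
      obtain ⟨x₀, y₀, hxy⟩ := htr
      classical
      set c : α → Bool := fun x => decide (∃ g : G, ρ g x₀ = x) with hc_def
      have hc : ∀ (g : G) (x : α), c (ρ g x) = c x := by
        intro g x
        simp only [hc_def, decide_eq_decide]
        constructor
        · rintro ⟨g', hg'⟩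
          refine ⟨g⁻¹ * g', ?_⟩
          rw [map_mul, Equiv.Perm.mul_apply, hg', map_inv]
          exact Equiv.symm_apply_apply _ _
        · rintro ⟨g', hg'⟩
          exact ⟨g * g', by rw [map_mul, Equiv.Perm.mul_apply, hg']⟩
      have hct : c x₀ = true := decide_eq_true ⟨1, by rw [map_one]; rfl⟩
      have hcf : c y₀ = false := decide_eq_false (fun ⟨g, hg⟩ => hxy g hg)
      have hsum : ∑ i, Nat.card {x : α // c x = i} = Nat.card α := card_fiber_sum c
      have hsum2 : Nat.card {x : α // c x = true} + Nat.card {x : α // c x = false}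
          = Nat.card α := by rw [← hsum, Fintype.sum_bool, Nat.add_comm]
      have hpos_t : 0 < Nat.card {x : α // c x = true} := by
        have : Nonempty {x : α // c x = true} := ⟨⟨x₀, hct⟩⟩
        exact Nat.card_pos
      have hpos_f : 0 < Nat.card {x : α // c x = false} := by
        have : Nonempty {x : α // c x = false} := ⟨⟨y₀, hcf⟩⟩
        exact Nat.card_pos
      have hb : ∀ i : Bool, Nat.card (MonoidHom.range (fiberHom ρ c hc i)) ≤
          2 ^ (Nat.card {x : α // c x = i} - 1) := by
        intro i
        have hfle : Nat.card {x : α // c x = i} ≤ Nat.card α - 1 := by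
          cases i <;> omega
        haveI : Group.IsNilpotent G := hG
        haveI : Group.IsNilpotent (MonoidHom.range (fiberHom ρ c hc i)) :=
          nilpotent_of_surjective _ (fiberHom ρ c hc i).rangeRestrict_surjective
        exact IH (Nat.card α - 1) (by omega) _ hfle _
          inferInstance _ (Subgroup.subtype_injective _)
      have hmain := counting ρ hρ c hc _ hb
      calc Nat.card G ≤ ∏ i, 2 ^ (Nat.card {x : α // c x = i} - 1) := hmain
        _ = 2 ^ (Nat.card {x : α // c x = true} - 1) *
            2 ^ (Nat.card {x : α // c x = false} - 1) := by
              rw [Fintype.prod_bool, Nat.mul_comm]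
        _ = 2 ^ ((Nat.card {x : α // c x = true} - 1) +
            (Nat.card {x : α // c x = false} - 1)) := (pow_add 2 _ _).symm
        _ ≤ 2 ^ (Nat.card α - 1) := Nat.pow_le_pow_right (by norm_num) (by omega)

private lemma exists_max_abelian_normal (G : Type) [Group G] [Finite G]
    (hG : Group.IsNilpotent G) :
    ∃ A : Subgroup G, A.Normal ∧ IsMulCommutative A ∧
      Subgroup.centralizer (A : Set G) = A := by
  classical
  haveI : Finite (Subgroup G) :=
    Finite.of_injective (fun H : Subgroup G => (H : Set G)) SetLike.coe_injective
  have hbot : (⊥ : Subgroup G).Normal ∧ IsMulCommutative (⊥ : Subgroup G) := by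
    refine ⟨inferInstance, ⟨⟨fun a b => Subsingleton.elim _ _⟩⟩⟩
  obtain ⟨A, hA, hmax⟩ := Set.Finite.exists_maximalFor (id)
    {B : Subgroup G | B.Normal ∧ IsMulCommutative B} (Set.toFinite _) ⟨⊥, hbot⟩
  obtain ⟨hAn, hAc⟩ := hA
  haveI := hAn
  haveI := hAc
  refine ⟨A, hAn, hAc, ?_⟩
  set C := Subgroup.centralizer (A : Set G) with hC_def
  have hAC : A ≤ C := by
    intro a ha
    exact Subgroup.mem_centralizer_iff.mpr fun b hb =>
      Subgroup.mul_comm_of_mem_isMulCommutative A hb ha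
  by_contra hne
  have hCA : ¬ C ≤ A := fun h => hne (le_antisymm h hAC)
  obtain ⟨x, hxC, hxA⟩ := SetLike.not_le_iff_exists.mp hCA
  haveI hCn : C.Normal := by
    constructor
    intro c hc g
    rw [hC_def, Subgroup.mem_centralizer_iff] at hc ⊢
    intro a ha
    have ha' : g⁻¹ * a * g ∈ A := by
      have := hAn.conj_mem a ha g⁻¹
      simpa [mul_assoc] using this
    have hcomm := hc (g⁻¹ * a * g) ha'
    have : g * ((g⁻¹ * a * g) * c) * g⁻¹ = g * (c * (g⁻¹ * a * g)) * g⁻¹ := by rw [hcomm]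
    calc a * (g * c * g⁻¹) = g * ((g⁻¹ * a * g) * c) * g⁻¹ := by group
      _ = g * (c * (g⁻¹ * a * g)) * g⁻¹ := this
      _ = (g * c * g⁻¹) * a := by group
  haveI : Group.IsNilpotent G := hG
  let π := QuotientGroup.mk' A
  let C' := C.map π
  haveI hC'n : C'.Normal := hCn.map π (QuotientGroup.mk'_surjective A)
  have hC'ne : C' ≠ ⊥ := by
    intro hb
    have : π x ∈ C' := Subgroup.mem_map_of_mem π hxC
    rw [hb, Subgroup.mem_bot] at this
    exact hxA ((QuotientGroup.eq_one_iff x).mp this)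
  have hcen := inf_center_ne_bot (inferInstance : Group.IsNilpotent (G ⧸ A)) C' hC'ne
  obtain ⟨q, hq1⟩ := Subgroup.ne_bot_iff_exists_ne_one.mp hcen
  obtain ⟨hqC', hqZ⟩ := q.2
  obtain ⟨y, hyC, hyq⟩ := Subgroup.mem_map.mp hqC'
  have hyA : y ∉ A := by
    intro h
    apply hq1
    apply Subtype.ext
    rw [← hyq]
    exact (QuotientGroup.eq_one_iff y).mpr h
  -- the subgroup generated by A and y
  let B := Subgroup.comap π (Subgroup.zpowers (π y))
  have hAB : A ≤ B := by
    intro a ha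
    have : π a = 1 := (QuotientGroup.eq_one_iff a).mpr ha
    simp only [B, Subgroup.mem_comap, this]
    exact Subgroup.one_mem _
  have hyB : y ∈ B := Subgroup.mem_comap.mpr (Subgroup.mem_zpowers _)
  haveI hzn : (Subgroup.zpowers (π y)).Normal := by
    constructor
    intro p hp g
    have hpz : p ∈ Subgroup.center (G ⧸ A) := by
      have hle : Subgroup.zpowers (π y) ≤ Subgroup.center (G ⧸ A) := by
        rw [Subgroup.zpowers_le]
        rw [hyq]
        exact hqZ
      exact hle hp
    have hgp : g * p = p * g := Subgroup.mem_center_iff.mp hpz g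
    have : g * p * g⁻¹ = p := by
      rw [hgp]
      group
    rw [this]
    exact hp
  haveI hBn : B.Normal := hzn.comap π
  -- B is commutative
  have hdecomp : ∀ b ∈ B, ∃ (j : ℤ) (a : G), a ∈ A ∧ b = y ^ j * a := by
    intro b hb
    have hb' : π b ∈ Subgroup.zpowers (π y) := Subgroup.mem_comap.mp hb
    obtain ⟨j, hj⟩ := Subgroup.mem_zpowers_iff.mp hb'
    refine ⟨j, (y ^ j)⁻¹ * b, ?_, by group⟩
    have hπ1 : π ((y ^ j)⁻¹ * b) = 1 := by
      rw [map_mul, map_inv, map_zpow, hj]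
      group
    have hker : (y ^ j)⁻¹ * b ∈ π.ker := MonoidHom.mem_ker.mpr hπ1
    rwa [QuotientGroup.ker_mk'] at hker
  have hyA_comm : ∀ a ∈ A, Commute y a := by
    intro a ha
    exact (Subgroup.mem_centralizer_iff.mp hyC a ha).symm
  have hBcomm : IsMulCommutative B := by
    constructor
    constructor
    rintro ⟨b₁, hb₁⟩ ⟨b₂, hb₂⟩
    apply Subtype.ext
    simp only [Subgroup.coe_mul]
    obtain ⟨j₁, a₁, ha₁, rfl⟩ := hdecomp b₁ hb₁
    obtain ⟨j₂, a₂, ha₂, rfl⟩ := hdecomp b₂ hb₂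
    have c1 : Commute (y ^ j₁) (y ^ j₂) := (Commute.refl y).zpow_zpow j₁ j₂
    have c2 : Commute (y ^ j₁) a₂ := (hyA_comm a₂ ha₂).zpow_left j₁
    have c3 : Commute a₁ (y ^ j₂) := ((hyA_comm a₁ ha₁).zpow_left j₂).symm
    have c4 : Commute a₁ a₂ := by
      have := Subgroup.mul_comm_of_mem_isMulCommutative A ha₁ ha₂
      exact this
    exact ((c1.mul_right c2).mul_left (c3.mul_right c4))
  have hABeq : A = B := le_antisymm hAB (hmax ⟨hBn, hBcomm⟩ hAB)
  rw [← hABeq] at hyB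
  exact hyA hyB

open Polynomial

set_option maxHeartbeats 2000000 in
theorem nilpotent_subgroup_GL_abelian_normal (m : ℕ)
    (N : Subgroup (GL (Fin m) ℂ)) [Finite N] (hN : Group.IsNilpotent N) :
    ∃ T : Subgroup N, T.Normal ∧ IsMulCommutative T ∧ T.index ≤ 2 ^ (m - 1) := by
  classical
  obtain ⟨A, hAn, hAc, hAcent⟩ := exists_max_abelian_normal (↥N) hN
  haveI := hAn
  haveI := hAc
  refine ⟨A, hAn, hAc, ?_⟩
  -- Linear algebra setup
  let V := Fin m → ℂ
  let e : Matrix (Fin m) (Fin m) ℂ ≃ₐ[ℂ] Module.End ℂ V := Matrix.toLinAlgEquiv'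
  let emh : Matrix (Fin m) (Fin m) ℂ →* Module.End ℂ V := e.toAlgHom.toRingHom.toMonoidHom
  let U : ↥N →* (Module.End ℂ V)ˣ := (Units.map emh).comp N.subtype
  let P : ↥N →* Module.End ℂ V := (Units.coeHom _).comp U
  have hPinj : Function.Injective P := by
    intro g h hgh
    apply Subtype.ext
    apply Units.ext
    exact e.injective hgh
  have hPU : ∀ g : ↥N, P g = ((U g : (Module.End ℂ V)ˣ) : Module.End ℂ V) := fun _ => rfl
  have hUinvP : ∀ (g : ↥N) (x : V), ((U g)⁻¹ : (Module.End ℂ V)ˣ).val (P g x) = x := by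
    intro g x
    have h1 : (((U g)⁻¹ : (Module.End ℂ V)ˣ).val * P g) x
        = ((U g)⁻¹ * U g : (Module.End ℂ V)ˣ).val x := by rw [hPU, Units.val_mul]
    rw [← Module.End.mul_apply, h1]
    rw [inv_mul_cancel]
    rfl
  let f : ↥A → Module.End ℂ V := fun a => P (a : ↥N)
  let W : (↥A → ℂ) → Submodule ℂ V := fun χ => ⨅ a : ↥A, (f a).maxGenEigenspace (χ a)
  have hcomm : ∀ a b : ↥A, Commute (f a) (f b) := by
    intro a b
    have h1 : (a : ↥N) * (b : ↥N) = (b : ↥N) * (a : ↥N) :=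
      Subgroup.mul_comm_of_mem_isMulCommutative A a.2 b.2
    show P a * P b = P b * P a
    rw [← map_mul, ← map_mul, h1]
  have htop : ⨆ χ : ↥A → ℂ, W χ = ⊤ :=
    Module.End.iSup_iInf_maxGenEigenspace_eq_top_of_iSup_maxGenEigenspace_eq_top_of_commute f
      (fun a b _ => hcomm a b) (fun a => Module.End.iSup_maxGenEigenspace_eq_top (f a))
  have hindep : iSupIndep W :=
    Module.End.independent_iInf_maxGenEigenspace_of_forall_mapsTo f
      (fun i j φ => Module.End.mapsTo_maxGenEigenspace_of_comm (hcomm j i) φ)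
  have heigen : ∀ (a : ↥A) (μ : ℂ), (f a).maxGenEigenspace μ = (f a).eigenspace μ := by
    intro a μ
    have hord : (f a) ^ (orderOf a) = 1 := by
      show (P a) ^ (orderOf a) = 1
      rw [← map_pow]
      have h1 : ((a : ↥N) : ↥N) ^ orderOf a = ((a ^ orderOf a : ↥A) : ↥N) := by
        rw [SubgroupClass.coe_pow]
      rw [h1, pow_orderOf_eq_one, Subgroup.coe_one, map_one]
    have hss : (f a).IsSemisimple := by
      apply Module.End.isSemisimple_of_squarefree_aeval_eq_zero
        (p := X ^ (orderOf a) - C 1)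
      · have hk : ((orderOf a : ℂ)) ≠ 0 := Nat.cast_ne_zero.mpr (orderOf_pos a).ne'
        exact (Polynomial.separable_X_pow_sub_C (1 : ℂ) hk one_ne_zero).squarefree
      · rw [map_sub, map_pow, Polynomial.aeval_X, Polynomial.aeval_C]
        simp [hord]
    exact hss.isFinitelySemisimple.maxGenEigenspace_eq_eigenspace μ
  have hscal : ∀ (χ : ↥A → ℂ) (a : ↥A) (x : V), x ∈ W χ → f a x = χ a • x := by
    intro χ a x hx
    have h1 : x ∈ (f a).maxGenEigenspace (χ a) := (iInf_le (fun a => (f a).maxGenEigenspace (χ a)) a) hx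
    rw [heigen] at h1
    exact Module.End.mem_eigenspace_iff.mp h1
  -- conjugation action on characters
  let ca : ↥N → ↥A → ↥A := fun g a => ⟨g * (a : ↥N) * g⁻¹, hAn.conj_mem (a : ↥N) a.2 g⟩
  let act : ↥N → (↥A → ℂ) → (↥A → ℂ) := fun g χ a => χ (ca g⁻¹ a)
  have act_mul : ∀ (g h : ↥N) (χ : ↥A → ℂ), act (g * h) χ = act g (act h χ) := by
    intro g h χ
    funext a
    show χ (ca (g * h)⁻¹ a) = χ (ca h⁻¹ (ca g⁻¹ a))
    congr 1
    apply Subtype.ext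
    show (g * h)⁻¹ * (a : ↥N) * ((g * h)⁻¹)⁻¹
      = h⁻¹ * (g⁻¹ * (a : ↥N) * (g⁻¹)⁻¹) * (h⁻¹)⁻¹
    group
  have act_one : ∀ χ : ↥A → ℂ, act 1 χ = χ := by
    intro χ
    funext a
    show χ (ca 1⁻¹ a) = χ a
    congr 1
    apply Subtype.ext
    show 1⁻¹ * (a : ↥N) * (1⁻¹)⁻¹ = (a : ↥N)
    group
  have hmaps : ∀ (g : ↥N) (χ : ↥A → ℂ) (x : V), x ∈ W χ → P g x ∈ W (act g χ) := by
    intro g χ x hx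
    have hx' : ∀ b : ↥A, x ∈ (f b).maxGenEigenspace (χ b) := fun b =>
      (iInf_le (fun b => (f b).maxGenEigenspace (χ b)) b) hx
    refine Submodule.mem_iInf _ |>.mpr fun a => ?_
    set b : ↥A := ca g⁻¹ a with hb_def
    have hxa := hx' b
    rw [Module.End.mem_maxGenEigenspace] at hxa ⊢
    obtain ⟨k, hk⟩ := hxa
    refine ⟨k, ?_⟩
    set μ := χ b with hμ_def
    have hab : (a : ↥N) = g * (b : ↥N) * g⁻¹ := by
      show (a : ↥N) = g * (g⁻¹ * (a : ↥N) * (g⁻¹)⁻¹) * g⁻¹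
      group
    have hfab : f a = (U g).val * f b * ((U g)⁻¹ : (Module.End ℂ V)ˣ).val := by
      show P (a : ↥N) = (U g).val * P (b : ↥N) * ((U g)⁻¹ : (Module.End ℂ V)ˣ).val
      rw [hab, map_mul, map_mul, hPU g, hPU g⁻¹, map_inv]
    have hsub : f a - μ • (1 : Module.End ℂ V)
        = (U g).val * (f b - μ • (1 : Module.End ℂ V)) * ((U g)⁻¹ : (Module.End ℂ V)ˣ).val := by
      rw [hfab, mul_sub, sub_mul]
      congr 1
      rw [mul_smul_comm, mul_one, smul_mul_assoc, Units.mul_inv]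
    rw [hsub, Units.conj_pow, Module.End.mul_apply, Module.End.mul_apply]
    rw [hUinvP g x, hk, map_zero]
  have hPne : ∀ (g : ↥N) (x : V), x ≠ 0 → P g x ≠ 0 := by
    intro g x hx h0
    apply hx
    have := hUinvP g x
    rw [h0, map_zero] at this
    exact this.symm
  have hact_ne : ∀ (g : ↥N) (χ : ↥A → ℂ), W χ ≠ ⊥ → W (act g χ) ≠ ⊥ := by
    intro g χ h
    obtain ⟨x, hx, hx0⟩ := Submodule.ne_bot_iff _ |>.mp h
    exact Submodule.ne_bot_iff _ |>.mpr ⟨P g x, hmaps g χ x hx, hPne g x hx0⟩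
  -- the permutation representation on characters with nonzero eigenspace
  let ST := {χ : ↥A → ℂ // W χ ≠ ⊥}
  haveI hSTfin : Fintype ST := hindep.fintypeNeBotOfFiniteDimensional
  let Φ : ↥N →* Equiv.Perm ST :=
    { toFun := fun g =>
        { toFun := fun χ => ⟨act g χ.1, hact_ne g χ.1 χ.2⟩
          invFun := fun χ => ⟨act g⁻¹ χ.1, hact_ne g⁻¹ χ.1 χ.2⟩
          left_inv := fun χ => Subtype.ext (by
            show act g⁻¹ (act g χ.1) = χ.1
            rw [← act_mul, inv_mul_cancel, act_one])
          right_inv := fun χ => Subtype.ext (by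
            show act g (act g⁻¹ χ.1) = χ.1
            rw [← act_mul, mul_inv_cancel, act_one]) }
      map_one' := Equiv.ext fun χ => Subtype.ext (act_one χ.1)
      map_mul' := fun g h => Equiv.ext fun χ => Subtype.ext (act_mul g h χ.1) }
  have hΦ_apply : ∀ (g : ↥N) (χ : ST), ((Φ g χ : ST) : ↥A → ℂ) = act g χ.1 := fun _ _ => rfl
  have hker : Φ.ker = A := by
    apply le_antisymm
    · intro g hg
      rw [MonoidHom.mem_ker] at hg
      rw [← hAcent, Subgroup.mem_centralizer_iff]
      intro a0 ha0
      set aA : ↥A := ⟨a0, ha0⟩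
      have hend : P g * f aA = f aA * P g := by
        have hWle : ∀ χ : ↥A → ℂ, W χ ≤ LinearMap.ker (P g * f aA - f aA * P g) := by
          intro χ
          by_cases hχ : W χ = ⊥
          · rw [hχ]
            exact bot_le
          · intro x hx
            rw [LinearMap.mem_ker, LinearMap.sub_apply, Module.End.mul_apply,
              Module.End.mul_apply]
            have h1 : f aA x = χ aA • x := hscal χ aA x hx
            have h4 : act g χ = χ := by
              have h5 := congrArg Subtype.val (Equiv.ext_iff.mp hg ⟨χ, hχ⟩)
              exact h5
            have h2 : P g x ∈ W χ := by
              have h3 := hmaps g χ x hx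
              rwa [h4] at h3
            have h5 : f aA (P g x) = χ aA • (P g x) := hscal χ aA _ h2
            rw [h1, h5, map_smul, sub_self]
        have hkt : LinearMap.ker (P g * f aA - f aA * P g) = ⊤ := by
          rw [← top_le_iff, ← htop]
          exact iSup_le hWle
        have hz := LinearMap.ker_eq_top.mp hkt
        exact sub_eq_zero.mp hz
      have hPP : P (g * a0) = P (a0 * g) := by
        rw [map_mul, map_mul]
        exact hend
      have := hPinj hPP
      exact this.symm
    · intro a0 ha0
      rw [MonoidHom.mem_ker]
      apply Equiv.ext
      rintro ⟨χ, hχ⟩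
      apply Subtype.ext
      show act a0 χ = χ
      funext a
      show χ (ca a0⁻¹ a) = χ a
      congr 1
      apply Subtype.ext
      show a0⁻¹ * (a : ↥N) * (a0⁻¹)⁻¹ = (a : ↥N)
      have hcomm3 : a0 * (a : ↥N) = (a : ↥N) * a0 :=
        Subgroup.mul_comm_of_mem_isMulCommutative A ha0 a.2
      rw [inv_inv, mul_assoc, ← hcomm3, ← mul_assoc, inv_mul_cancel, one_mul]
  -- conclude with the permutation bound
  have hSTcard : Nat.card ST ≤ m := by
    rw [Nat.card_eq_fintype_card]
    have h1 := hindep.subtype_ne_bot_le_finrank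
    have h2 : Module.finrank ℂ V = m := Module.finrank_fin_fun ℂ
    rw [h2] at h1
    exact h1
  haveI : Group.IsNilpotent ↥N := hN
  haveI : Group.IsNilpotent Φ.range := nilpotent_of_surjective _ Φ.rangeRestrict_surjective
  have h3 := nilpotent_perm_card (Nat.card ST) ST le_rfl ↥Φ.range
    inferInstance Φ.range.subtype (Subgroup.subtype_injective _)
  have h2 : Nat.card (↥N ⧸ A) = Nat.card Φ.range := by
    rw [← hker]
    exact Nat.card_congr (QuotientGroup.quotientKerEquivRange Φ).toEquiv
  calc A.index = Nat.card (↥N ⧸ A) := rfl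
    _ = Nat.card Φ.range := h2
    _ ≤ 2 ^ (Nat.card ST - 1) := h3
    _ ≤ 2 ^ (m - 1) := Nat.pow_le_pow_right (by norm_num) (by omega)
end

section
/- Every finite nilpotent subgroup of GL(m, ℂ) is conjugate to a group of monomial matrices. -/
/-- A matrix is monomial if it has exactly one nonzero entry in each row and column. -/
def Matrix.IsMonomial {m : ℕ} (A : Matrix (Fin m) (Fin m) ℂ) : Prop :=
  (∀ i, ∃! j, A i j ≠ 0) ∧ (∀ j, ∃! i, A i j ≠ 0)

open Module

lemma center_ne_bot_of_nilpotent (G : Type*) [Group G] [Nontrivial G]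
    (hG : Group.IsNilpotent G) : Subgroup.center G ≠ ⊥ := by
  intro hc
  obtain ⟨n, hn⟩ := hG.nilpotent
  have key : ∀ k, Subgroup.upperCentralSeries G k = ⊥ := by
    intro k
    induction k with
    | zero => exact Subgroup.upperCentralSeries_zero G
    | succ k ih =>
      rw [eq_bot_iff]
      intro x hx
      rw [Subgroup.mem_upperCentralSeries_succ_iff] at hx
      have hxc : x ∈ Subgroup.center G := by
        rw [Subgroup.mem_center_iff]
        intro y
        have h1 := hx y
        rw [ih, Subgroup.mem_bot] at h1
        rw [commutatorElement_def, mul_inv_eq_one, mul_inv_eq_iff_eq_mul] at h1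
        exact h1.symm
      rw [hc, Subgroup.mem_bot] at hxc
      simp [hxc]
  obtain ⟨x, hx1⟩ := exists_ne (1 : G)
  apply hx1
  have : x ∈ Subgroup.upperCentralSeries G n := by rw [hn]; trivial
  rwa [key n, Subgroup.mem_bot] at this

/-- Restriction of a representation to a subgroup acting on an invariant submodule. -/
noncomputable def Representation.subRep {G : Type*} [Group G] {V : Type*} [AddCommGroup V]
    [Module ℂ V] (ρ : Representation ℂ G V) (K : Subgroup G) (W : Submodule ℂ V)
    (hW : ∀ k : K, ∀ v ∈ W, ρ (k : G) v ∈ W) : Representation ℂ K W where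
  toFun k := (ρ (k : G)).restrict (fun v hv => hW k v hv)
  map_one' := by
    ext v
    simp [LinearMap.restrict_apply]
  map_mul' k₁ k₂ := by
    ext v
    simp [LinearMap.restrict_apply, Module.End.mul_apply]

@[simp] lemma Representation.subRep_apply {G : Type*} [Group G] {V : Type*} [AddCommGroup V]
    [Module ℂ V] (ρ : Representation ℂ G V) (K : Subgroup G) (W : Submodule ℂ V)
    (hW : ∀ k : K, ∀ v ∈ W, ρ (k : G) v ∈ W) (k : K) (v : W) :
    ((ρ.subRep K W hW k v : W) : V) = ρ (k : G) (v : V) := rfl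

universe u v

theorem monomial_basis_key (n : ℕ) :
    ∀ (G : Type v) [Group G] [Finite G], Group.IsNilpotent G →
    ∀ (V : Type u) [AddCommGroup V] [Module ℂ V] [FiniteDimensional ℂ V],
    Module.finrank ℂ V ≤ n →
    ∀ (ρ : Representation ℂ G V),
    ∃ (ι : Type u) (b : Basis ι ℂ V),
      ∀ (g : G) (i : ι), ∃ (j : ι) (c : ℂ), ρ g (b i) = c • b j := by
  induction n with
  | zero =>
    intro G _ _ _ V _ _ _ hn ρ
    haveI : Subsingleton V := by
      rw [← Module.finrank_zero_iff (R := ℂ)]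
      omega
    exact ⟨PEmpty, Basis.empty V, fun g i => i.elim⟩
  | succ n IH =>
    intro G _ _ hG V _ _ _ hn ρ
    classical
    haveI := hG
    by_cases hVtriv : Subsingleton V
    · exact ⟨PEmpty, Basis.empty V, fun g i => i.elim⟩
    haveI : Nontrivial V := not_subsingleton_iff_nontrivial.mp hVtriv
    by_cases hsc : ∀ g : G, ∃ c : ℂ, ρ g = c • (1 : Module.End ℂ V)
    · -- all scalar: any basis works
      obtain b := (Module.finBasis ℂ V).reindex (Equiv.ulift.{u, 0}).symm
      refine ⟨_, b, fun g i => ?_⟩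
      obtain ⟨c, hc⟩ := hsc g
      exact ⟨i, c, by rw [hc]; simp⟩
    push_neg at hsc
    obtain ⟨g₀, hg₀⟩ := hsc
    -- scalars in the image are nonzero
    have hc0 : ∀ (g : G) (c : ℂ), ρ g = c • (1 : Module.End ℂ V) → c ≠ 0 := by
      intro g c hgc hc
      rw [hc, zero_smul] at hgc
      obtain ⟨w, hw⟩ := exists_ne (0 : V)
      apply hw
      have h1 : ρ g⁻¹ * ρ g = 1 := by rw [← map_mul]; simp
      rw [hgc, mul_zero] at h1
      have := DFunLike.congr_fun h1 w
      simpa using this.symm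
    -- the subgroup of scalar-acting elements
    let S : Subgroup G :=
      { carrier := {g | ∃ c : ℂ, ρ g = c • (1 : Module.End ℂ V)}
        one_mem' := ⟨1, by simp⟩
        mul_mem' := by
          rintro x y ⟨c, hc⟩ ⟨e, he⟩
          exact ⟨c * e, by rw [map_mul, hc, he, smul_mul_smul_comm, one_mul]⟩
        inv_mem' := by
          rintro x ⟨c, hc⟩
          have hcne := hc0 x c hc
          refine ⟨c⁻¹, ?_⟩
          have h1 : ρ x * ρ x⁻¹ = 1 := by rw [← map_mul]; simp
          rw [hc, smul_mul_assoc, one_mul] at h1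
          rw [eq_comm, ← h1, smul_smul, inv_mul_cancel₀ hcne, one_smul] }
    have hSmem : ∀ g : G, g ∈ S ↔ ∃ c : ℂ, ρ g = c • (1 : Module.End ℂ V) := fun g => Iff.rfl
    haveI hSnorm : S.Normal := by
      constructor
      rintro x ⟨c, hc⟩ g
      refine ⟨c, ?_⟩
      rw [map_mul, map_mul, hc, mul_smul_comm, smul_mul_assoc, mul_one, ← map_mul]
      simp
    -- find a non-scalar element with all commutators scalar
    have hQnontriv : Nontrivial (G ⧸ S) := by
      refine ⟨⟨QuotientGroup.mk g₀, 1, ?_⟩⟩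
      rw [Ne, QuotientGroup.eq_one_iff]
      intro hmem
      obtain ⟨c, hc⟩ := (hSmem g₀).mp hmem
      exact hg₀ c hc
    have hZ := center_ne_bot_of_nilpotent (G ⧸ S) inferInstance
    obtain ⟨q, hqmem, hq1⟩ : ∃ q, q ∈ Subgroup.center (G ⧸ S) ∧ q ≠ 1 := by
      by_contra hcon
      push_neg at hcon
      exact hZ ((Subgroup.eq_bot_iff_forall _).mpr hcon)
    set a : G := q.out with ha
    have hmka : QuotientGroup.mk a = q := QuotientGroup.out_eq' q
    have hanotS : a ∉ S := by
      intro hmem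
      apply hq1
      rw [← hmka, QuotientGroup.eq_one_iff]
      exact hmem
    have hA : ∀ c : ℂ, ρ a ≠ c • (1 : Module.End ℂ V) := by
      intro c hcon
      exact hanotS ⟨c, hcon⟩
    have hAne : ρ a ≠ 0 := by
      intro h
      exact hA 0 (by rw [h, zero_smul])
    have hacomm : ∀ h : G, h * a * h⁻¹ * a⁻¹ ∈ S := by
      intro h
      have : QuotientGroup.mk (h * a * h⁻¹ * a⁻¹) = (1 : G ⧸ S) := by
        have hcomm := Subgroup.mem_center_iff.mp hqmem (QuotientGroup.mk h)
        simp only [QuotientGroup.mk_mul, QuotientGroup.mk_inv, hmka]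
        rw [hcomm]
        group
      rwa [QuotientGroup.eq_one_iff] at this
    -- the scalar cocycle d
    have hd_ex : ∀ h : G, ∃ c : ℂ, c ≠ 0 ∧ ρ (h * a * h⁻¹) = c • ρ a := by
      intro h
      obtain ⟨c, hc⟩ := (hSmem _).mp (hacomm h)
      refine ⟨c, hc0 _ c hc, ?_⟩
      have : h * a * h⁻¹ = (h * a * h⁻¹ * a⁻¹) * a := by group
      rw [this, map_mul, hc, smul_mul_assoc, one_mul]
    choose d hd0 hdspec using hd_ex
    have huniq : ∀ (h : G) (c : ℂ), ρ (h * a * h⁻¹) = c • ρ a → c = d h := by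
      intro h c hc
      have h2 := hdspec h
      rw [hc] at h2
      have h3 : (c - d h) • ρ a = 0 := by rw [sub_smul, h2, sub_self]
      rcases smul_eq_zero.mp h3 with h4 | h4
      · exact sub_eq_zero.mp h4
      · exact absurd h4 hAne
    have hd_one : d 1 = 1 := (huniq 1 1 (by simp)).symm
    have hd_mul : ∀ h₁ h₂ : G, d (h₁ * h₂) = d h₁ * d h₂ := by
      intro h₁ h₂
      refine (huniq _ _ ?_).symm
      have key : h₁ * h₂ * a * (h₁ * h₂)⁻¹ = h₁ * (h₂ * a * h₂⁻¹) * h₁⁻¹ := by group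
      rw [key, map_mul, map_mul, hdspec h₂, mul_smul_comm, smul_mul_assoc,
        ← map_mul, ← map_mul, hdspec h₁, smul_smul, mul_comm (d h₂)]
    have hd_inv : ∀ h : G, d h⁻¹ = (d h)⁻¹ := by
      intro h
      have := hd_mul h⁻¹ h
      rw [inv_mul_cancel, hd_one] at this
      exact eq_inv_of_mul_eq_one_left this.symm
    -- the eigenspace decomposition of A = ρ a
    set A : Module.End ℂ V := ρ a with hAdef
    set E : ℂ → Submodule ℂ V := fun μ => A.eigenspace μ with hEdef
    have hAmap : ∀ (h : G) (μ : ℂ) (v : V), v ∈ E μ → ρ h v ∈ E ((d h)⁻¹ * μ) := by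
      intro h μ v hv
      rw [hEdef] at hv ⊢
      rw [Module.End.mem_eigenspace_iff] at hv ⊢
      have h1 : ρ (h * a * h⁻¹) (ρ h v) = μ • ρ h v := by
        have : h * a * h⁻¹ * h = h * a := by group
        rw [← Module.End.mul_apply, ← map_mul, this, map_mul, Module.End.mul_apply, hv,
          map_smul]
      rw [hdspec h] at h1
      have h2 : A (ρ h v) = (d h)⁻¹ • (μ • ρ h v) := by
        rw [← h1]
        simp [smul_smul, inv_mul_cancel₀ (hd0 h)]
      rw [h2, smul_smul]
    have hAinj : ∀ v : V, A v = 0 → v = 0 := by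
      intro v hv
      have : ρ a⁻¹ (A v) = v := by
        rw [hAdef, ← Module.End.mul_apply, ← map_mul, inv_mul_cancel, map_one,
          Module.End.one_apply]
      rw [hv, map_zero] at this
      exact this.symm
    have hE0 : E 0 = ⊥ := by
      show A.eigenspace 0 = ⊥
      rw [Module.End.eigenspace_zero, LinearMap.ker_eq_bot']
      intro v hv
      exact hAinj v hv
    have hproper : ∀ μ : ℂ, E μ ≠ ⊤ := by
      intro μ hcon
      apply hA μ
      apply LinearMap.ext
      intro v
      have : v ∈ E μ := by rw [hcon]; trivial
      rw [hEdef, Module.End.mem_eigenspace_iff] at this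
      simpa using this
    -- semisimplicity: eigenspaces span
    have hAss : A.IsSemisimple := by
      have hcard : (Nat.card G : ℂ) ≠ 0 := by
        have : Nat.card G ≠ 0 := Nat.card_pos.ne'
        exact_mod_cast this
      apply Module.End.isSemisimple_of_squarefree_aeval_eq_zero
        (p := Polynomial.X ^ Nat.card G - Polynomial.C 1)
        ((Polynomial.separable_X_pow_sub_C (1 : ℂ) hcard one_ne_zero).squarefree)
      have : A ^ Nat.card G = 1 := by
        rw [hAdef, ← map_pow, pow_card_eq_one', map_one]
      simp [this]
    have htop : (⨆ μ : ℂ, E μ) = ⊤ := by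
      have h1 := Module.End.iSup_maxGenEigenspace_eq_top A
      have h2 : ∀ μ : ℂ, A.maxGenEigenspace μ = E μ := fun μ =>
        hAss.isFinitelySemisimple.maxGenEigenspace_eq_eigenspace μ
      rw [← h1]
      exact iSup_congr fun μ => (h2 μ).symm
    have hInternal : DirectSum.IsInternal E :=
      (DirectSum.isInternal_submodule_iff_iSupIndep_and_iSup_eq_top E).mpr
        ⟨A.eigenspaces_iSupIndep, htop⟩
    -- the kernel subgroup K of d
    let K : Subgroup G :=
      { carrier := {h | d h = 1}
        one_mem' := hd_one
        mul_mem' := by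
          intro x y hx hy
          show d (x * y) = 1
          rw [hd_mul, hx, hy, one_mul]
        inv_mem' := by
          intro x hx
          show d x⁻¹ = 1
          rw [hd_inv, hx, inv_one] }
    have hKmem : ∀ h : G, h ∈ K ↔ d h = 1 := fun h => Iff.rfl
    -- orbit representatives on ℂ
    let st : Setoid ℂ :=
      { r := fun μ ν => ∃ h : G, ν = (d h)⁻¹ * μ
        iseqv := by
          constructor
          · intro μ; exact ⟨1, by rw [hd_one]; ring⟩
          · rintro μ ν ⟨h, rfl⟩
            refine ⟨h⁻¹, ?_⟩
            rw [hd_inv, inv_inv, ← mul_assoc, mul_inv_cancel₀ (hd0 h), one_mul]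
          · rintro μ ν ξ ⟨h₁, rfl⟩ ⟨h₂, rfl⟩
            refine ⟨h₁ * h₂, ?_⟩
            rw [hd_mul, mul_inv, mul_assoc]
            ring }
    let r : ℂ → ℂ := fun μ => (Quotient.mk st μ).out
    have hmk : ∀ μ : ℂ, Quotient.mk st (r μ) = Quotient.mk st μ := fun μ => Quotient.out_eq _
    have hrel : ∀ μ : ℂ, ∃ h : G, μ = (d h)⁻¹ * r μ := fun μ => Quotient.exact (hmk μ)
    have hr2 : ∀ μ ν : ℂ, (∃ h : G, ν = (d h)⁻¹ * μ) → r μ = r ν := by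
      intro μ ν hrel'
      exact congrArg Quotient.out (Quotient.sound hrel')
    choose gg hgg using hrel
    -- invariance facts
    have hKinv : ∀ (σ : ℂ) (k : K), ∀ v ∈ E σ, ρ (k : G) v ∈ E σ := by
      intro σ k v hv
      have := hAmap (k : G) σ v hv
      rwa [(hKmem (k : G)).mp k.2, inv_one, one_mul] at this
    have hggmap : ∀ μ : ℂ, ∀ v ∈ E (r μ), ρ (gg μ) v ∈ E μ := by
      intro μ v hv
      have := hAmap (gg μ) (r μ) v hv
      rwa [← hgg μ] at this
    have hggmap' : ∀ μ : ℂ, ∀ v ∈ E μ, ρ (gg μ)⁻¹ v ∈ E (r μ) := by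
      intro μ v hv
      have := hAmap (gg μ)⁻¹ μ v hv
      rw [hd_inv, inv_inv] at this
      have heq : d (gg μ) * μ = r μ := by
        conv_lhs =>
          arg 2
          rw [hgg μ]
        rw [← mul_assoc, mul_inv_cancel₀ (hd0 (gg μ)), one_mul]
      rwa [heq] at this
    -- recursive bases for the eigenspaces
    have hIH : ∀ σ : ℂ, ∃ (ι : Type u) (b : Basis ι ℂ (E σ)),
        ∀ (k : K) (i : ι), ∃ (j : ι) (c : ℂ),
          ρ.subRep K (E σ) (fun k v hv => hKinv σ k v hv) k (b i) = c • b j := by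
      intro σ
      haveI : FiniteDimensional ℂ (E σ) := inferInstance
      apply IH K inferInstance (E σ)
      have hlt : Module.finrank ℂ (E σ) < Module.finrank ℂ V :=
        Submodule.finrank_lt (hproper σ)
      omega
    choose α bas hbas using hIH
    -- bases transported to each eigenspace
    have hgginv : ∀ (μ : ℂ) (v : V), ρ (gg μ) (ρ (gg μ)⁻¹ v) = v := by
      intro μ v
      rw [← Module.End.mul_apply, ← map_mul, mul_inv_cancel, map_one, Module.End.one_apply]
    have hgginv' : ∀ (μ : ℂ) (v : V), ρ (gg μ)⁻¹ (ρ (gg μ) v) = v := by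
      intro μ v
      rw [← Module.End.mul_apply, ← map_mul, inv_mul_cancel, map_one, Module.End.one_apply]
    let e : ∀ μ : ℂ, (E (r μ)) ≃ₗ[ℂ] (E μ) := fun μ =>
      LinearEquiv.ofLinear
        ((ρ (gg μ)).restrict (p := E (r μ)) (q := E μ) (fun v hv => hggmap μ v hv))
        ((ρ (gg μ)⁻¹).restrict (p := E μ) (q := E (r μ)) (fun v hv => hggmap' μ v hv))
        (by ext v; exact hgginv μ v)
        (by ext v; exact hgginv' μ v)
    let bE : ∀ μ : ℂ, Basis (α (r μ)) ℂ (E μ) := fun μ => (bas (r μ)).map (e μ)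
    let B : Basis (Σ μ : ℂ, α (r μ)) ℂ V := hInternal.collectedBasis bE
    let w : ∀ σ : ℂ, α σ → V := fun σ i => (bas σ i : V)
    have hwmem : ∀ (σ : ℂ) (i : α σ), w σ i ∈ E σ := fun σ i => (bas σ i).2
    have hwcast : ∀ {σ τ : ℂ} (hστ : σ = τ) (i : α σ), w τ (hστ ▸ i) = w σ i := by
      rintro σ τ rfl i; rfl
    have hB : ∀ p : Σ μ : ℂ, α (r μ), B p = ρ (gg p.1) (w (r p.1) p.2) := by
      rintro ⟨μ, i⟩
      rw [show B ⟨μ, i⟩ = ((bE μ i : E μ) : V) from congrFun (hInternal.collectedBasis_coe bE) ⟨μ, i⟩]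
      simp only [bE, Basis.map_apply, LinearEquiv.ofLinear_apply, e]
      rfl
    have hw : ∀ (σ : ℂ) (k : G) (hk : k ∈ K) (i : α σ), ∃ (j : α σ) (c : ℂ),
        ρ k (w σ i) = c • w σ j := by
      intro σ k hk i
      obtain ⟨j, c, hj⟩ := hbas σ ⟨k, hk⟩ i
      refine ⟨j, c, ?_⟩
      have := congrArg (Subtype.val) hj
      simpa [w] using this
    -- assemble
    refine ⟨(Σ μ : ℂ, α (r μ)), B, ?_⟩
    rintro h ⟨μ, i⟩
    by_cases hμ0 : μ = 0
    · exfalso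
      subst hμ0
      have h6 : r 0 = 0 := by
        rcases mul_eq_zero.mp (hgg 0).symm with h7 | h7
        · exact absurd h7 (inv_ne_zero (hd0 (gg 0)))
        · exact h7
      apply B.ne_zero ⟨0, i⟩
      rw [hB ⟨0, i⟩]
      have h8 : w (r 0) i = 0 := by
        have h9 := hwmem (r 0) i
        have h10 : E (r 0) = ⊥ := by rw [h6]; exact hE0
        rw [h10] at h9
        simpa using h9
      rw [h8, map_zero]
    · -- main case
      set ν : ℂ := (d h)⁻¹ * μ with hνdef
      have hrν : r μ = r ν := hr2 μ ν ⟨h, rfl⟩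
      have hrμ0 : r μ ≠ 0 := by
        intro hr0
        apply hμ0
        rw [hgg μ, hr0, mul_zero]
      set k : G := (gg ν)⁻¹ * h * gg μ with hkdef
      have hdk : k ∈ K := by
        rw [hKmem]
        rw [hkdef, hd_mul, hd_mul, hd_inv]
        have e2 : (d (gg ν))⁻¹ * r μ = ((d h)⁻¹ * (d (gg μ))⁻¹) * r μ := by
          rw [mul_assoc, ← hgg μ, hrν, ← hgg ν]
        have e3 : (d (gg ν))⁻¹ = (d h)⁻¹ * (d (gg μ))⁻¹ := mul_right_cancel₀ hrμ0 e2
        rw [e3]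
        field_simp
        exact div_self (mul_ne_zero (hd0 h) (hd0 (gg μ)))
      obtain ⟨j, c, hj⟩ := hw (r μ) k hdk i
      refine ⟨⟨ν, hrν ▸ j⟩, c, ?_⟩
      have hcompose : gg ν * k = h * gg μ := by rw [hkdef]; group
      calc ρ h (B ⟨μ, i⟩) = ρ h (ρ (gg μ) (w (r μ) i)) := by rw [hB]
        _ = ρ (gg ν) (ρ k (w (r μ) i)) := by
            rw [← Module.End.mul_apply, ← map_mul, ← hcompose, map_mul, Module.End.mul_apply]
        _ = ρ (gg ν) (c • w (r μ) j) := by rw [hj]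
        _ = c • ρ (gg ν) (w (r ν) (hrν ▸ j)) := by rw [map_smul, hwcast hrν j]
        _ = c • B ⟨ν, hrν ▸ j⟩ := by rw [hB ⟨ν, hrν ▸ j⟩]

theorem nilpotent_subgroup_GL_conjugate_monomial (m : ℕ)
    (N : Subgroup (GL (Fin m) ℂ)) [Finite N] (hN : Group.IsNilpotent N) :
    ∃ g : GL (Fin m) ℂ, ∀ x ∈ N,
      Matrix.IsMonomial ((g * x * g⁻¹ : GL (Fin m) ℂ) : Matrix (Fin m) (Fin m) ℂ) := by
  classical
  let ρ : Representation ℂ N (Fin m → ℂ) :=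
    { toFun := fun x => Matrix.toLin' ((x : GL (Fin m) ℂ) : Matrix (Fin m) (Fin m) ℂ)
      map_one' := by
        simp
        rfl
      map_mul' := by
        intro x y
        simp [Units.val_mul, Matrix.toLin'_mul, Module.End.mul_eq_comp] }
  obtain ⟨ι, b₀, hb₀⟩ := monomial_basis_key m N hN (Fin m → ℂ)
    (by rw [Module.finrank_pi]; simp) ρ
  haveI : Fintype ι := FiniteDimensional.fintypeBasisIndex b₀
  have hcard : Fintype.card ι = m := by
    have h1 := Module.finrank_eq_card_basis b₀
    rw [Module.finrank_pi] at h1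
    simpa using h1.symm
  let e : ι ≃ Fin m := Fintype.equivFinOfCardEq hcard
  let b : Basis (Fin m) ℂ (Fin m → ℂ) := b₀.reindex e
  have hb : ∀ (x : N) (i : Fin m), ∃ (j : Fin m) (c : ℂ),
      Matrix.mulVec ((x : GL (Fin m) ℂ) : Matrix (Fin m) (Fin m) ℂ) (b i) = c • b j := by
    intro x i
    obtain ⟨j, c, hj⟩ := hb₀ x (e.symm i)
    refine ⟨e j, c, ?_⟩
    rw [show b i = b₀ (e.symm i) from b₀.reindex_apply e i,
      show b (e j) = b₀ (e.symm (e j)) from b₀.reindex_apply e (e j), Equiv.symm_apply_apply]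
    rw [← Matrix.toLin'_apply]
    exact hj
  let s : Basis (Fin m) ℂ (Fin m → ℂ) := Pi.basisFun ℂ (Fin m)
  let P : Matrix (Fin m) (Fin m) ℂ := s.toMatrix ⇑b
  let P' : Matrix (Fin m) (Fin m) ℂ := b.toMatrix ⇑s
  have hPP' : P * P' = 1 := Basis.toMatrix_mul_toMatrix_flip s b
  have hP'P : P' * P = 1 := Basis.toMatrix_mul_toMatrix_flip b s
  have hPentry : ∀ k i, P k i = b i k := by
    intro k i
    simp [P, s, Basis.toMatrix_apply, Pi.basisFun_repr]
  refine ⟨⟨P', P, hP'P, hPP'⟩, ?_⟩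
  intro x hx
  choose σ cc hσc using hb ⟨x, hx⟩
  -- injectivity of the matrix action
  have hinj : ∀ v : Fin m → ℂ, Matrix.mulVec ((x : GL (Fin m) ℂ) : Matrix (Fin m) (Fin m) ℂ) v = 0
      → v = 0 := by
    intro v hv
    have h2 : Matrix.mulVec ((x⁻¹ : GL (Fin m) ℂ) : Matrix (Fin m) (Fin m) ℂ)
        (Matrix.mulVec ((x : GL (Fin m) ℂ) : Matrix (Fin m) (Fin m) ℂ) v) = v := by
      rw [Matrix.mulVec_mulVec, ← Units.val_mul, inv_mul_cancel, Units.val_one,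
        Matrix.one_mulVec]
    rw [hv, Matrix.mulVec_zero] at h2
    exact h2.symm
  have hcne : ∀ i, cc i ≠ 0 := by
    intro i hci
    have h5 := hσc i
    rw [hci, zero_smul] at h5
    exact b.ne_zero i (hinj (b i) h5)
  have hσinj : Function.Injective σ := by
    intro i1 i2 h12
    by_contra hne
    have e3 : Matrix.mulVec ((x : GL (Fin m) ℂ) : Matrix (Fin m) (Fin m) ℂ)
        (cc i2 • b i1 - cc i1 • b i2) = 0 := by
      rw [← Matrix.toLin'_apply, map_sub, map_smul, map_smul, Matrix.toLin'_apply,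
        Matrix.toLin'_apply, hσc i1, hσc i2, h12, smul_comm]
      exact sub_self _
    have e4 : cc i2 • b i1 = cc i1 • b i2 := sub_eq_zero.mp (hinj _ e3)
    have e5 := congrArg (fun v => b.repr v i1) e4
    have hne' : i2 ≠ i1 := fun hcon => hne hcon.symm
    simp [Finsupp.single_apply, hne'] at e5
    exact hcne i2 e5
  have hσbij : Function.Bijective σ := Finite.injective_iff_bijective.mp hσinj
  let σe : Fin m ≃ Fin m := Equiv.ofBijective σ hσbij
  have hσe : ∀ i, σe i = σ i := fun i => rfl
  let D : Matrix (Fin m) (Fin m) ℂ := Matrix.of fun j i => if j = σ i then cc i else 0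
  have hxP : ((x : GL (Fin m) ℂ) : Matrix (Fin m) (Fin m) ℂ) * P = P * D := by
    ext r i
    have hL : (((x : GL (Fin m) ℂ) : Matrix (Fin m) (Fin m) ℂ) * P) r i = cc i * b (σ i) r := by
      rw [Matrix.mul_apply]
      have h1 : ∑ k, ((x : GL (Fin m) ℂ) : Matrix (Fin m) (Fin m) ℂ) r k * P k i
          = Matrix.mulVec ((x : GL (Fin m) ℂ) : Matrix (Fin m) (Fin m) ℂ) (b i) r := by
        simp [Matrix.mulVec, dotProduct, hPentry]
      rw [h1, hσc i]
      simp
    have hR : (P * D) r i = cc i * b (σ i) r := by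
      rw [Matrix.mul_apply]
      have h2 : ∀ j, P r j * D j i = if j = σ i then b j r * cc i else 0 := by
        intro j
        simp only [D, Matrix.of_apply, hPentry, mul_ite, mul_zero]
      simp only [h2]
      rw [Finset.sum_eq_single (σ i)]
      · rw [if_pos rfl]; ring
      · intro j _ hj; rw [if_neg hj]
      · intro habs; exact absurd (Finset.mem_univ _) habs
    rw [hL, hR]
  have hfinal : (((⟨P', P, hP'P, hPP'⟩ : GL (Fin m) ℂ) * x * (⟨P', P, hP'P, hPP'⟩ : GL (Fin m) ℂ)⁻¹
      : GL (Fin m) ℂ) : Matrix (Fin m) (Fin m) ℂ) = D := by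
    show P' * ((x : GL (Fin m) ℂ) : Matrix (Fin m) (Fin m) ℂ) * P = D
    rw [mul_assoc, hxP, ← mul_assoc, hP'P, one_mul]
  rw [hfinal]
  constructor
  · intro i0
    refine ⟨σe.symm i0, ?_, ?_⟩
    · have h3 : σ (σe.symm i0) = i0 := σe.apply_symm_apply i0
      simp only [D, Matrix.of_apply, h3, if_pos rfl]
      exact hcne _
    · intro y hy
      simp only [D, Matrix.of_apply, ne_eq, ite_eq_right_iff, not_forall] at hy
      obtain ⟨h4, -⟩ := hy
      apply σe.injective
      rw [σe.apply_symm_apply]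
      exact (hσe y).trans h4.symm
  · intro j0
    refine ⟨σ j0, ?_, ?_⟩
    · simp only [D, Matrix.of_apply, if_pos rfl]
      exact hcne _
    · intro y hy
      simp only [D, Matrix.of_apply, ne_eq, ite_eq_right_iff, not_forall] at hy
      exact hy.1
end
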